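/- Let g : ℝ → ℝ be a (strictly increasing, continuous, surjective) increasing homeomorphism, let G be its Beurling–Ahlfors extension, and suppose that the map Ḡ : ℝ×[0,∞) → ℝ×[0,∞) defined by Ḡ = G on ℝ×(0,∞) and Ḡ(x,0) = (g(x), 0) is a homeomorphism of the closed upper half-plane onto itself. Let x ∈ ℝ and 0 < r < R, and set R′ = (1/2)·min_{k=1,…,8} ( g(x − R + kR/4) − g(x − R + (k−1)R/4) ) and r′ = g(x+2r) − g(x−2r). Then Ḡ( D[x,R] \ D[x,r] ) ⊇ D[g(x), R′] \ D[g(x), r′]. -/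

import Mathlib

/-!
At a point `(u, v)` of the small box every argument `u ± t v` fed to `g` by the extension lies
in `[x - 2r, x + 2r]`, so `Ḡ(D[x,r]) ⊆ D[g(x), r']`. For the large box, splitting the defining
integrals at `t = 3/4` (sides) or `t = 1/4` (top) shows that `Ḡ` pushes the two vertical sides
and the top side of `D[x,R]` out of `D[g(x), R']`: each of them is moved past the target by one
of the eight quarter-cells of `[x - R, x + R]`, on which `g` grows by at least `2R'`. As `Ḡ` is
a homeomorphism of the closed half-plane, the connected box `D[g(x), R']`, which contains
`Ḡ(x,0) = (g(x), 0)` and misses the image of the relative frontier of `D[x,R]`, lies inside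
`Ḡ(D[x,R])`.
-/

open MeasureTheory

/-- The Beurling–Ahlfors extension of `ψ : ℝ → ℝ`, as a map on the (open) upper half-plane. -/
noncomputable def BA (ψ : ℝ → ℝ) (p : ℝ × ℝ) : ℝ × ℝ :=
  ((1 / 2) * ∫ t in (0 : ℝ)..1, (ψ (p.1 + t * p.2) + ψ (p.1 - t * p.2)),
    ∫ t in (0 : ℝ)..1, (ψ (p.1 + t * p.2) - ψ (p.1 - t * p.2)))

/-- The Beurling–Ahlfors extension, extended to the closed upper half-plane by the
boundary values `(g x, 0)`. -/
noncomputable def BAbar (g : ℝ → ℝ) (p : ℝ × ℝ) : ℝ × ℝ :=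
  if 0 < p.2 then BA g p else (g p.1, 0)

/-- The box `D[x,r] = [x-r, x+r] × [0, r]`. -/
def Dbox (x r : ℝ) : Set (ℝ × ℝ) := Set.Icc (x - r) (x + r) ×ˢ Set.Icc 0 r

open Set

theorem le_integral_of_le_on_split {f : ℝ → ℝ} (hf : IntervalIntegrable f volume 0 1)
    {m c d : ℝ} (hm₀ : 0 ≤ m) (hm₁ : m ≤ 1)
    (hc : ∀ t ∈ Icc 0 m, c ≤ f t) (hd : ∀ t ∈ Icc m 1, d ≤ f t) :
    m * c + (1 - m) * d ≤ ∫ t in (0 : ℝ)..1, f t := by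
  have hsub : ∀ {a b}, 0 ≤ a → a ≤ b → b ≤ 1 → IntervalIntegrable f volume a b :=
    fun ha hab hb => hf.mono_set (uIcc_subset_uIcc (by simp [uIcc_of_le, ha, hab.trans hb])
      (by simp [uIcc_of_le, ha.trans hab, hb]))
  rw [← intervalIntegral.integral_add_adjacent_intervals (hsub le_rfl hm₀ hm₁)
    (hsub hm₀ hm₁ le_rfl)]
  have h₁ := intervalIntegral.integral_mono_on hm₀ intervalIntegrable_const
    (hsub le_rfl hm₀ hm₁) hc
  have h₂ := intervalIntegral.integral_mono_on hm₁ intervalIntegrable_const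
    (hsub hm₀ hm₁ le_rfl) hd
  simp only [intervalIntegral.integral_const, smul_eq_mul, sub_zero] at h₁ h₂
  linarith

theorem integral_le_of_le_on_split {f : ℝ → ℝ} (hf : IntervalIntegrable f volume 0 1)
    {m c d : ℝ} (hm₀ : 0 ≤ m) (hm₁ : m ≤ 1)
    (hc : ∀ t ∈ Icc 0 m, f t ≤ c) (hd : ∀ t ∈ Icc m 1, f t ≤ d) :
    ∫ t in (0 : ℝ)..1, f t ≤ m * c + (1 - m) * d := by
  have := le_integral_of_le_on_split (f := fun t => -f t) hf.neg hm₀ hm₁ (c := -c) (d := -d)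
    (fun t ht => neg_le_neg (hc t ht)) (fun t ht => neg_le_neg (hd t ht))
  rw [intervalIntegral.integral_neg] at this
  linarith

theorem BAbar_eq_BA (g : ℝ → ℝ) {p : ℝ × ℝ} (hp : 0 ≤ p.2) : BAbar g p = BA g p := by
  rcases hp.lt_or_eq with hp | hp
  · simp [BAbar, hp]
  · simp [BAbar, BA, ← hp]
    ring

section Estimates

variable {g : ℝ → ℝ} {p : ℝ × ℝ}

theorem Monotone.intervalIntegrable_comp_add_mul (hg : Monotone g) (hp : 0 ≤ p.2) (a b : ℝ) :
    IntervalIntegrable (fun t => g (p.1 + t * p.2)) volume a b :=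
  (hg.comp ((monotone_id.mul_const hp).const_add p.1)).intervalIntegrable

theorem Monotone.intervalIntegrable_comp_sub_mul (hg : Monotone g) (hp : 0 ≤ p.2) (a b : ℝ) :
    IntervalIntegrable (fun t => g (p.1 - t * p.2)) volume a b :=
  (hg.comp_antitone fun _ _ hst => sub_le_sub_left (mul_le_mul_of_nonneg_right hst hp) _
    ).intervalIntegrable

theorem BA_fst_le (hg : Monotone g) (hp : 0 ≤ p.2) :
    (BA g p).1 ≤ (3 * g (p.1 + 3 * p.2 / 4) + g (p.1 + p.2)) / 4 := by
  have := integral_le_of_le_on_split ((hg.intervalIntegrable_comp_add_mul hp 0 1).add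
      (hg.intervalIntegrable_comp_sub_mul hp 0 1)) (m := 3 / 4) (by norm_num) (by norm_num)
    (c := 2 * g (p.1 + 3 * p.2 / 4)) (d := 2 * g (p.1 + p.2))
    (fun t ht => by
      have h₁ : g (p.1 + t * p.2) ≤ g (p.1 + 3 * p.2 / 4) := hg (by nlinarith [ht.1, ht.2])
      have h₂ : g (p.1 - t * p.2) ≤ g (p.1 + 3 * p.2 / 4) := hg (by nlinarith [ht.1, ht.2])
      linarith)
    (fun t ht => by
      have h₁ : g (p.1 + t * p.2) ≤ g (p.1 + p.2) := hg (by nlinarith [ht.1, ht.2])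
      have h₂ : g (p.1 - t * p.2) ≤ g (p.1 + p.2) := hg (by nlinarith [ht.1, ht.2])
      linarith)
  simp only [BA]
  linarith

theorem le_BA_fst (hg : Monotone g) (hp : 0 ≤ p.2) :
    (g (p.1 - p.2) + 3 * g (p.1 - 3 * p.2 / 4)) / 4 ≤ (BA g p).1 := by
  have := le_integral_of_le_on_split ((hg.intervalIntegrable_comp_add_mul hp 0 1).add
      (hg.intervalIntegrable_comp_sub_mul hp 0 1)) (m := 3 / 4) (by norm_num) (by norm_num)
    (c := 2 * g (p.1 - 3 * p.2 / 4)) (d := 2 * g (p.1 - p.2))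
    (fun t ht => by
      have h₁ : g (p.1 - 3 * p.2 / 4) ≤ g (p.1 + t * p.2) := hg (by nlinarith [ht.1, ht.2])
      have h₂ : g (p.1 - 3 * p.2 / 4) ≤ g (p.1 - t * p.2) := hg (by nlinarith [ht.1, ht.2])
      linarith)
    (fun t ht => by
      have h₁ : g (p.1 - p.2) ≤ g (p.1 + t * p.2) := hg (by nlinarith [ht.1, ht.2])
      have h₂ : g (p.1 - p.2) ≤ g (p.1 - t * p.2) := hg (by nlinarith [ht.1, ht.2])
      linarith)
  simp only [BA]
  linarith

theorem BA_snd_le (hg : Monotone g) (hp : 0 ≤ p.2) :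
    (BA g p).2 ≤ g (p.1 + p.2) - g (p.1 - p.2) := by
  have := intervalIntegral.integral_mono_on zero_le_one ((hg.intervalIntegrable_comp_add_mul hp
      0 1).sub (hg.intervalIntegrable_comp_sub_mul hp 0 1))
    (intervalIntegrable_const (c := g (p.1 + p.2) - g (p.1 - p.2))) fun t ht =>
      sub_le_sub (hg (by nlinarith [ht.1, ht.2])) (hg (by nlinarith [ht.1, ht.2]))
  simpa [BA] using this

theorem le_BA_snd (hg : Monotone g) (hp : 0 ≤ p.2) :
    3 / 4 * (g (p.1 + p.2 / 4) - g (p.1 - p.2 / 4)) ≤ (BA g p).2 := by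
  have := le_integral_of_le_on_split ((hg.intervalIntegrable_comp_add_mul hp 0 1).sub
      (hg.intervalIntegrable_comp_sub_mul hp 0 1)) (m := 1 / 4) (by norm_num) (by norm_num)
    (c := 0) (d := g (p.1 + p.2 / 4) - g (p.1 - p.2 / 4))
    (fun t ht => by
      have : g (p.1 - t * p.2) ≤ g (p.1 + t * p.2) := hg (by nlinarith [ht.1, ht.2])
      linarith)
    (fun t ht => by
      have h₁ : g (p.1 + p.2 / 4) ≤ g (p.1 + t * p.2) := hg (by nlinarith [ht.1, ht.2])
      have h₂ : g (p.1 - t * p.2) ≤ g (p.1 - p.2 / 4) := hg (by nlinarith [ht.1, ht.2])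
      linarith)
  simp only [BA]
  linarith

theorem Monotone.le_sub_of_forall_cell (hg : Monotone g) {a h δ : ℝ} {n : ℕ} (hh : 0 < h)
    (hn : 1 ≤ n) (hcell : ∀ k ∈ Finset.Icc 1 n, δ ≤ g (a + k * h) - g (a + (k - 1) * h))
    {s : ℝ} (hs : s ∈ Icc a (a + n * h)) : δ ≤ g (s + h) - g (s - h) := by
  set u := (s - a) / h
  have hu₀ : 0 ≤ u := div_nonneg (by linarith [hs.1]) hh.le
  have hun : u ≤ n := (div_le_iff₀ hh).2 (by linarith [hs.2])
  have hs_eq : s = a + u * h := by simp only [u, div_mul_cancel₀ _ hh.ne']; ring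
  -- the cell `[a + (k-1) h, a + k h]` lies in the window `[s - h, s + h]`
  set k := min (⌊u⌋₊ + 1) n
  have hk : k ∈ Finset.Icc 1 n := Finset.mem_Icc.2 ⟨le_min (by omega) hn, min_le_right _ _⟩
  have hk_le : (k : ℝ) ≤ u + 1 := by
    calc (k : ℝ) ≤ (⌊u⌋₊ + 1 : ℕ) := Nat.cast_le.2 (min_le_left _ _)
      _ ≤ u + 1 := by push_cast; linarith [Nat.floor_le hu₀]
  have hk_ge : u ≤ k := by
    rcases min_choice (⌊u⌋₊ + 1) n with h' | h' <;> simp only [k, h']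
    · push_cast; exact (Nat.lt_floor_add_one u).le
    · exact hun
  have := hcell k hk
  have h₁ : g (a + k * h) ≤ g (s + h) := hg (by rw [hs_eq]; nlinarith)
  have h₂ : g (s - h) ≤ g (a + (k - 1) * h) := hg (by rw [hs_eq]; nlinarith)
  linarith

theorem BAbar_mem_Dbox (hg : Monotone g) {x r : ℝ} (hp : p ∈ Dbox x r) :
    BAbar g p ∈ Dbox (g x) (g (x + 2 * r) - g (x - 2 * r)) := by
  obtain ⟨⟨hp₁, hp₁'⟩, hp₂, hp₂'⟩ := hp
  rw [BAbar_eq_BA g hp₂]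
  have hlo : g (x - 2 * r) ≤ g (p.1 - p.2) := hg (by linarith)
  have hhi : g (p.1 + p.2) ≤ g (x + 2 * r) := hg (by linarith)
  have hx₁ : g (x - 2 * r) ≤ g x := hg (by linarith)
  have hx₂ : g x ≤ g (x + 2 * r) := hg (by linarith)
  have h₁ : g (p.1 - p.2) ≤ g (p.1 - 3 * p.2 / 4) := hg (by linarith)
  have h₂ : g (p.1 + 3 * p.2 / 4) ≤ g (p.1 + p.2) := hg (by linarith)
  have h₃ : g (p.1 - p.2 / 4) ≤ g (p.1 + p.2 / 4) := hg (by linarith)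
  have := le_BA_fst hg hp₂
  have := BA_fst_le hg hp₂
  have := BA_snd_le hg hp₂
  have := le_BA_snd hg hp₂
  refine ⟨⟨?_, ?_⟩, ?_, ?_⟩ <;> linarith

theorem BAbar_notMem_Dbox_of_notMem_Ioo_prod_Iio (hg : Monotone g) {x R ρ : ℝ} (hρ : 0 < ρ)
    (hleft : 2 * ρ ≤ g x - g (x - R / 4)) (hright : 2 * ρ ≤ g (x + R / 4) - g x)
    (hwindow : ∀ s ∈ Icc (x - R) (x + R), 2 * ρ ≤ g (s + R / 4) - g (s - R / 4))
    (hp : p ∈ Dbox x R) (hpe : p ∉ Ioo (x - R) (x + R) ×ˢ Iio R) :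
    BAbar g p ∉ Dbox (g x) ρ := by
  obtain ⟨⟨hp₁, hp₁'⟩, hp₂, hp₂'⟩ := hp
  rw [BAbar_eq_BA g hp₂]
  rintro ⟨⟨hq₁, hq₁'⟩, -, hq₂'⟩
  simp only [mem_prod, mem_Ioo, mem_Iio, not_and_or, not_lt] at hpe
  rcases hpe with (hpl | hpr) | hpt
  · have := BA_fst_le hg hp₂
    have : g (p.1 + 3 * p.2 / 4) ≤ g (x - R / 4) := hg (by linarith)
    have : g (p.1 + p.2) ≤ g x := hg (by linarith)
    linarith
  · have := le_BA_fst hg hp₂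
    have : g (x + R / 4) ≤ g (p.1 - 3 * p.2 / 4) := hg (by linarith)
    have : g x ≤ g (p.1 - p.2) := hg (by linarith)
    linarith
  · have := le_BA_snd hg hp₂
    have := hwindow p.1 ⟨hp₁, hp₁'⟩
    have : g (p.1 + R / 4) ≤ g (p.1 + p.2 / 4) := hg (by linarith)
    have : g (p.1 - p.2 / 4) ≤ g (p.1 - R / 4) := hg (by linarith)
    linarith

end Estimates

theorem IsPreconnected.subset_of_disjoint_frontier {X : Type*} [TopologicalSpace X]
    {s t : Set X} (hs : IsPreconnected s) (hst : (s ∩ t).Nonempty)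
    (hfr : Disjoint s (frontier t)) : s ⊆ t := by
  have hint : closure t ∩ s ⊆ interior t := fun z ⟨hzc, hzs⟩ => by
    by_contra hzi
    exact hfr.notMem_of_mem_left hzs ⟨hzc, hzi⟩
  obtain ⟨z, hzs, hzt⟩ := hst
  have := hs.subset_of_closure_inter_subset isOpen_interior
    ⟨z, hzs, hint ⟨subset_closure hzt, hzs⟩⟩
    (fun z hz => hint ⟨closure_mono interior_subset hz.1, hz.2⟩)
  exact this.trans interior_subset

theorem Dbox_subset_image_of_homeomorph {f : ℝ × ℝ → ℝ × ℝ}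
    (e : {p : ℝ × ℝ // 0 ≤ p.2} ≃ₜ {p : ℝ × ℝ // 0 ≤ p.2}) (he : ∀ p, (e p : ℝ × ℝ) = f p)
    {x R y ρ : ℝ} (hR : 0 ≤ R) (hρ : 0 ≤ ρ) (hx : f (x, 0) = (y, 0))
    (hedge : ∀ p ∈ Dbox x R, p ∉ Ioo (x - R) (x + R) ×ˢ Iio R → f p ∉ Dbox y ρ) :
    Dbox y ρ ⊆ f '' Dbox x R := by
  set K : Set {p : ℝ × ℝ // 0 ≤ p.2} := Subtype.val ⁻¹' Dbox x R
  set S : Set {p : ℝ × ℝ // 0 ≤ p.2} := Subtype.val ⁻¹' Dbox y ρ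
  have hS : IsPreconnected S := by
    have hconv : Convex ℝ (Dbox y ρ) := (convex_Icc _ _).prod (convex_Icc _ _)
    rw [← Topology.IsEmbedding.subtypeVal.isInducing.isPreconnected_image,
      image_preimage_eq_of_subset fun q hq => ⟨⟨q, hq.2.1⟩, rfl⟩]
    exact hconv.isPreconnected
  -- in the closed half-plane the bottom side of the box is not part of its frontier
  have hfrK : frontier K ⊆ K \ Subtype.val ⁻¹' (Ioo (x - R) (x + R) ×ˢ Iio R) := by
    have hK : IsClosed K := (isClosed_Icc.prod isClosed_Icc).preimage continuous_subtype_val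
    refine fun q hq => ⟨hK.frontier_subset hq, fun hqU => hq.2 (interior_maximal ?_
      ((isOpen_Ioo.prod isOpen_Iio).preimage continuous_subtype_val) hqU)⟩
    exact fun q hq => ⟨⟨hq.1.1.le, hq.1.2.le⟩, q.2, hq.2.le⟩
  have hSK : S ⊆ e '' K := by
    refine hS.subset_of_disjoint_frontier ⟨e ⟨(x, 0), le_rfl⟩, ?_, ?_⟩ ?_
    · show (e ⟨(x, 0), le_rfl⟩ : ℝ × ℝ) ∈ Dbox y ρ
      rw [he, hx]
      exact ⟨⟨by linarith, by linarith⟩, le_rfl, hρ⟩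
    · exact mem_image_of_mem e ⟨⟨by linarith, by linarith⟩, le_rfl, hR⟩
    · rw [← e.image_frontier, disjoint_right]
      rintro _ ⟨q, hq, rfl⟩
      show (e q : ℝ × ℝ) ∉ Dbox y ρ
      rw [he]
      exact hedge q (hfrK hq).1 (hfrK hq).2
  intro q hq
  obtain ⟨w, hw, hwq⟩ := hSK (show ⟨q, hq.2.1⟩ ∈ S from hq)
  exact ⟨w, hw, (he w).symm.trans (congrArg Subtype.val hwq)⟩

theorem stmt9 (g : ℝ → ℝ) (hmono : StrictMono g)
    (hhomeo : ∃ h : {p : ℝ × ℝ // 0 ≤ p.2} ≃ₜ {p : ℝ × ℝ // 0 ≤ p.2},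
      ∀ p : {p : ℝ × ℝ // 0 ≤ p.2}, (h p : ℝ × ℝ) = BAbar g p)
    (x r R : ℝ) (hr : 0 < r) (hrR : r < R) (R' r' : ℝ)
    (hR' : R' = (1 / 2) * (Finset.Icc 1 8).inf' (Finset.nonempty_Icc.mpr (by norm_num))
      (fun k : ℕ => g (x - R + (k : ℝ) * R / 4) - g (x - R + ((k : ℝ) - 1) * R / 4)))
    (hr' : r' = g (x + 2 * r) - g (x - 2 * r)) :
    Dbox (g x) R' \ Dbox (g x) r' ⊆ BAbar g '' (Dbox x R \ Dbox x r) := by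
  obtain ⟨e, he⟩ := hhomeo
  have hR : 0 < R := hr.trans hrR
  have hR'pos : 0 < R' := by
    rw [hR']
    exact mul_pos one_half_pos
      ((Finset.lt_inf'_iff _).2 fun k _ => sub_pos.2 (hmono (by linarith)))
  have hcell : ∀ k : ℕ, k ∈ Finset.Icc 1 8 →
      2 * R' ≤ g (x - R + (k : ℝ) * (R / 4)) - g (x - R + ((k : ℝ) - 1) * (R / 4)) := by
    intro k hk
    have := Finset.inf'_le
      (fun k : ℕ => g (x - R + (k : ℝ) * R / 4) - g (x - R + ((k : ℝ) - 1) * R / 4)) hk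
    simp only [← mul_div_assoc]
    linarith
  have hleft : 2 * R' ≤ g x - g (x - R / 4) := by
    convert hcell 4 (by simp) using 3 <;> push_cast <;> ring
  have hright : 2 * R' ≤ g (x + R / 4) - g x := by
    convert hcell 5 (by simp) using 3 <;> push_cast <;> ring
  have hwindow : ∀ s ∈ Icc (x - R) (x + R), 2 * R' ≤ g (s + R / 4) - g (s - R / 4) :=
    fun s hs => hmono.monotone.le_sub_of_forall_cell (by positivity) (by norm_num) hcell
      (by convert hs using 2; push_cast; ring)
  have hbig : Dbox (g x) R' ⊆ BAbar g '' Dbox x R :=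
    Dbox_subset_image_of_homeomorph e he hR.le hR'pos.le (by simp [BAbar])
      fun p hp hpe => BAbar_notMem_Dbox_of_notMem_Ioo_prod_Iio hmono.monotone hR'pos hleft
        hright hwindow hp hpe
  rintro _ ⟨hq, hqr⟩
  obtain ⟨p, hp, rfl⟩ := hbig hq
  exact ⟨p, ⟨hp, fun hpr => hqr (hr' ▸ BAbar_mem_Dbox hmono.monotone hpr)⟩, rfl⟩
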